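/- arXiv:2304.07106 — 4 statements merged into one kernel-verified Lean document; each statement's English description precedes it below -/
import Mathlib

section
/- Let c₁, c̄₁, c̄₂, c̄₃ be positive constants with c₁ ≤ c̄₁. Then for all real numbers x ≥ 0, γ ≥ 0 and every real number W with c₁x² ≤ W ≤ c̄₁x², the following inequality holds: (−c̄₃x² + c̄₂xγ)/(W + 1) ≤ −c̄₃x²/(2(c̄₁x² + 1)) + c̄₂²γ²/(2c̄₃(c₁x² + 1)). -/
/-!
Young's inequality `2 x (c̄₂ γ) ≤ c̄₃ x² + c̄₃⁻¹ (c̄₂ γ)²` absorbs half of the decay term `-c̄₃ x²` into the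
cross term. Then `W + 1` is sandwiched between `c₁ x² + 1` and `c̄₁ x² + 1`: the remaining negative part
only gets smaller in size over the larger denominator, the positive part only grows over the smaller one.
-/

theorem neg_add_div_le_neg_div_add_div {a b p q r : ℝ} (ha : 0 ≤ a) (hb : 0 ≤ b) (hr : 0 < r)
    (hrp : r ≤ p) (hpq : p ≤ q) :
    (-a + b) / p ≤ -a / q + b / r := by
  have hp : 0 < p := hr.trans_le hrp
  rw [add_div, neg_div, neg_div]
  gcongr

theorem V2_decay_core_general (c₁ c₁' c₂' c₃' : ℝ)
    (hc₁ : 0 < c₁) (hc₃' : 0 < c₃') :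
    ∀ (x γ W : ℝ), 0 ≤ x → 0 ≤ γ → c₁ * x ^ 2 ≤ W → W ≤ c₁' * x ^ 2 →
      (-(c₃' * x ^ 2) + c₂' * x * γ) / (W + 1) ≤
        -(c₃' * x ^ 2) / (2 * (c₁' * x ^ 2 + 1))
          + c₂' ^ 2 * γ ^ 2 / (2 * c₃' * (c₁ * x ^ 2 + 1)) := by
  intro x γ W _ _ hWl hWu
  have hlow : 0 < c₁ * x ^ 2 + 1 := by positivity
  have hyoung : -(c₃' * x ^ 2) + c₂' * x * γ ≤ -(c₃' * x ^ 2 / 2) + c₂' ^ 2 * γ ^ 2 / (2 * c₃') := by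
    linear_combination two_mul_le_add_mul_sq hc₃' (a := x) (b := c₂' * γ) / 2
  calc (-(c₃' * x ^ 2) + c₂' * x * γ) / (W + 1)
      ≤ (-(c₃' * x ^ 2 / 2) + c₂' ^ 2 * γ ^ 2 / (2 * c₃')) / (W + 1) :=
        div_le_div_of_nonneg_right hyoung (by linarith)
    _ ≤ -(c₃' * x ^ 2 / 2) / (c₁' * x ^ 2 + 1) + c₂' ^ 2 * γ ^ 2 / (2 * c₃') / (c₁ * x ^ 2 + 1) :=
        neg_add_div_le_neg_div_add_div (by positivity) (by positivity) hlow (by linarith)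
          (by linarith)
    _ = _ := by simp only [neg_div, div_div]

/-- the core pointwise estimate in the proof of inequality (14c) of Lemma 1:
`(−c̄₃x² + c̄₂xγ)/(W + 1) ≤ −c̄₃x²/(2(c̄₁x² + 1)) + c̄₂²γ²/(2c̄₃(c₁x² + 1))`. -/
theorem V2_decay_core (c₁ c₁' c₂' c₃' : ℝ)
    (hc₁ : 0 < c₁) (hc₁' : 0 < c₁') (hc₂' : 0 < c₂') (hc₃' : 0 < c₃')
    (hle : c₁ ≤ c₁') :
    ∀ (x γ W : ℝ), 0 ≤ x → 0 ≤ γ → c₁ * x ^ 2 ≤ W → W ≤ c₁' * x ^ 2 →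
      (-(c₃' * x ^ 2) + c₂' * x * γ) / (W + 1) ≤
        -(c₃' * x ^ 2) / (2 * (c₁' * x ^ 2 + 1))
          + c₂' ^ 2 * γ ^ 2 / (2 * c₃' * (c₁ * x ^ 2 + 1)) :=
  V2_decay_core_general c₁ c₁' c₂' c₃' hc₁ hc₃'
end

section
/- Let n ≥ 1, a, m ∈ ℝⁿ, ϱ = m − a, let Φ(a) and M = Φ(m) be the companion matrices of a and m, and let N = (0,…,0,1)ᵀ ∈ ℝⁿ. Let S ∈ Mₙ(ℝ) be the matrix whose i-th row equals ϱᵀ(Φ(a) + Iₙ)Φ(a)^{i−1} for i = 1,…,n, and suppose S is invertible, with T = S⁻¹. Then T·Φ(a) − M·T = N·ϱᵀ·T. -/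
open Matrix

/-- The companion matrix `Φ(a)` of `a = (a₁, …, aₙ)`: superdiagonal entries `1`,
last row `(−a₁, …, −aₙ)`, all other entries `0`. -/
def companion {n : ℕ} (a : Fin n → ℝ) : Matrix (Fin n) (Fin n) ℝ :=
  Matrix.of fun i j =>
    if (i : ℕ) + 1 = n then -a j else if (j : ℕ) = (i : ℕ) + 1 then 1 else 0


lemma single_vecMul' {n : ℕ} (i : Fin n) (M : Matrix (Fin n) (Fin n) ℝ) :
    vecMul (Pi.single i 1) M = M i := by
  funext j
  simp [vecMul, dotProduct, Pi.single_apply, Finset.sum_ite_eq]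

/-- e₀ Φᵏ = eₖ for k < n. -/
lemma row_pow {n : ℕ} (hn : 1 ≤ n) (a : Fin n → ℝ) (k : ℕ) (hk : k < n) :
    vecMul (Pi.single (⟨0, hn⟩ : Fin n) 1) (companion a ^ k) = Pi.single (⟨k, hk⟩ : Fin n) 1 := by
  induction k with
  | zero => simp
  | succ k ih =>
    have hk' : k < n := Nat.lt_of_succ_lt hk
    rw [pow_succ, ← vecMul_vecMul, ih hk', single_vecMul']
    funext j
    simp only [companion, of_apply, Pi.single_apply]
    have : ¬ ((⟨k, hk'⟩ : Fin n) : ℕ) + 1 = n := by simp; omega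
    rw [if_neg this]
    by_cases hj : (j : ℕ) = k + 1
    · rw [if_pos hj, if_pos (by ext; simp [hj])]
    · rw [if_neg hj, if_neg (by intro h; apply hj; rw [h])]

lemma row_pow_n {n : ℕ} (hn : 1 ≤ n) (a : Fin n → ℝ) :
    vecMul (Pi.single (⟨0, hn⟩ : Fin n) 1) (companion a ^ n) = -a := by
  have h1 : n - 1 < n := by omega
  have : n = (n-1) + 1 := by omega
  rw [show companion a ^ n = companion a ^ (n-1) * companion a by
        rw [← pow_succ, Nat.sub_add_cancel hn],
      ← vecMul_vecMul, row_pow hn a (n-1) h1, single_vecMul']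
  funext j
  simp only [companion, of_apply]
  rw [if_pos (show n - 1 + 1 = n by omega)]
  rfl

lemma vecMul_smulM {n : ℕ} (v : Fin n → ℝ) (c : ℝ) (M : Matrix (Fin n) (Fin n) ℝ) :
    vecMul v (c • M) = c • vecMul v M := by
  funext i
  simp only [vecMul, dotProduct, Matrix.smul_apply, Pi.smul_apply, smul_eq_mul,
    Finset.mul_sum]
  exact Finset.sum_congr rfl fun k _ => by ring

lemma sum_neg_single {n : ℕ} (a : Fin n → ℝ) :
    ∑ j : Fin n, (-a j) • (Pi.single j 1 : Fin n → ℝ) = -a := by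
  funext i
  simp only [Finset.sum_apply, Pi.smul_apply, Pi.single_apply, smul_eq_mul, mul_ite,
    mul_one, mul_zero, Finset.sum_ite_eq, Finset.mem_univ, if_true, Pi.neg_apply]

lemma vecMul_sum' {n : ℕ} (v : Fin n → ℝ) (A : Fin n → Matrix (Fin n) (Fin n) ℝ) :
    vecMul v (∑ j : Fin n, A j) = ∑ j : Fin n, vecMul v (A j) := by
  funext i
  simp only [vecMul, dotProduct, Finset.sum_apply, Matrix.sum_apply, Finset.mul_sum]
  rw [Finset.sum_comm]

/-- Cayley–Hamilton for the companion matrix. -/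
lemma companion_CH {n : ℕ} (hn : 1 ≤ n) (a : Fin n → ℝ) :
    companion a ^ n = ∑ j : Fin n, (-a j) • companion a ^ (j : ℕ) := by
  set Φ := companion a
  have hpow : ∀ j : Fin n, vecMul (Pi.single (⟨0, hn⟩ : Fin n) 1) (Φ ^ (j : ℕ)) = Pi.single j 1 := by
    intro j
    have := row_pow hn a (j:ℕ) j.isLt
    rwa [Fin.eta] at this
  have hrow0 : vecMul (Pi.single (⟨0, hn⟩ : Fin n) 1) (∑ j : Fin n, (-a j) • Φ ^ (j : ℕ)) = -a := by
    rw [vecMul_sum']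
    have : ∀ j : Fin n, vecMul (Pi.single (⟨0, hn⟩ : Fin n) 1) ((-a j) • Φ ^ (j : ℕ))
        = (-a j) • (Pi.single j 1 : Fin n → ℝ) := fun j => by rw [vecMul_smulM, hpow]
    simp_rw [this]
    exact sum_neg_single a
  ext i j
  have hi := hpow i
  have hcomm : (∑ j : Fin n, (-a j) • Φ ^ (j : ℕ)) * Φ ^ (i:ℕ)
      = Φ ^ (i:ℕ) * (∑ j : Fin n, (-a j) • Φ ^ (j : ℕ)) := by
    rw [Finset.sum_mul, Finset.mul_sum]
    refine Finset.sum_congr rfl fun k _ => ?_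
    rw [smul_mul_assoc, mul_smul_comm, ← pow_add, ← pow_add, Nat.add_comm]
  calc (Φ ^ n) i j = vecMul (Pi.single i 1) (Φ ^ n) j := by rw [single_vecMul']
    _ = vecMul (Pi.single (⟨0, hn⟩ : Fin n) 1) (Φ ^ (i:ℕ) * Φ ^ n) j := by
        rw [← vecMul_vecMul, hi]
    _ = vecMul (Pi.single (⟨0, hn⟩ : Fin n) 1) (Φ ^ n * Φ ^ (i:ℕ)) j := by
        rw [← pow_add, ← pow_add, Nat.add_comm]
    _ = vecMul (-a) (Φ ^ (i:ℕ)) j := by rw [← vecMul_vecMul, row_pow_n hn a]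
    _ = vecMul (Pi.single (⟨0, hn⟩ : Fin n) 1) ((∑ j : Fin n, (-a j) • Φ ^ (j : ℕ)) * Φ ^ (i:ℕ)) j := by
        rw [← vecMul_vecMul, hrow0]
    _ = vecMul (Pi.single i 1) (∑ j : Fin n, (-a j) • Φ ^ (j : ℕ)) j := by
        rw [hcomm, ← vecMul_vecMul, hi]
    _ = (∑ j : Fin n, (-a j) • Φ ^ (j : ℕ)) i j := by rw [single_vecMul']

lemma comm_S {n : ℕ} (hn : 1 ≤ n) (a ϱ : Fin n → ℝ)
    (S : Matrix (Fin n) (Fin n) ℝ)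
    (hS : S = Matrix.of fun (i j : Fin n) =>
      Matrix.vecMul ϱ ((companion a + 1) * companion a ^ (i : ℕ)) j) :
    companion a * S = S * companion a := by
  subst hS
  set Φ := companion a with hΦ
  ext i j
  have hrowS : ∀ k : Fin n, ∀ j : Fin n,
      (Matrix.of fun (i j : Fin n) => Matrix.vecMul ϱ ((Φ + 1) * Φ ^ (i : ℕ)) j) k j
      = vecMul ϱ ((Φ + 1) * Φ ^ (k:ℕ)) j := fun _ _ => rfl
  have hRHS : ((Matrix.of fun (i j : Fin n) => Matrix.vecMul ϱ ((Φ + 1) * Φ ^ (i : ℕ)) j) * Φ) i j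
      = vecMul ϱ ((Φ + 1) * Φ ^ ((i:ℕ)+1)) j := by
    rw [mul_apply]
    have : ∀ k : Fin n, (Matrix.of fun (i j : Fin n) => Matrix.vecMul ϱ ((Φ + 1) * Φ ^ (i : ℕ)) j) i k * Φ k j
        = vecMul ϱ ((Φ + 1) * Φ ^ (i:ℕ)) k * Φ k j := fun k => rfl
    simp_rw [this]
    have : ∑ k, vecMul ϱ ((Φ + 1) * Φ ^ (i:ℕ)) k * Φ k j
        = vecMul (vecMul ϱ ((Φ + 1) * Φ ^ (i:ℕ))) Φ j := rfl
    rw [this, vecMul_vecMul, mul_assoc, ← pow_succ]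
  rw [hRHS, mul_apply]
  simp_rw [hrowS]
  by_cases hc : (i:ℕ) + 1 = n
  · have hΦi : ∀ k : Fin n, Φ i k = -a k := fun k => by
      rw [hΦ]; simp only [companion, of_apply]; rw [if_pos hc]
    simp_rw [hΦi]
    rw [hc, companion_CH hn a, ← hΦ, Finset.mul_sum]
    have : ∀ k : Fin n, (Φ + 1) * ((-a k) • Φ ^ (k:ℕ)) = (-a k) • ((Φ + 1) * Φ ^ (k:ℕ)) :=
      fun k => mul_smul_comm _ _ _
    simp_rw [this]
    rw [vecMul_sum']
    simp only [Finset.sum_apply]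
    refine Finset.sum_congr rfl fun k _ => ?_
    rw [vecMul_smulM]
    simp [smul_eq_mul]
  · have hlt : (i:ℕ) + 1 < n := Nat.lt_of_le_of_ne (Nat.succ_le_of_lt i.isLt) hc
    have hΦi : ∀ k : Fin n, Φ i k = if (k:ℕ) = (i:ℕ)+1 then 1 else 0 := fun k => by
      rw [hΦ]; simp only [companion, of_apply]; rw [if_neg hc]
    simp_rw [hΦi]
    have hsplit : ∀ k : Fin n, (if (k:ℕ) = (i:ℕ)+1 then (1:ℝ) else 0) * vecMul ϱ ((Φ+1) * Φ ^ (k:ℕ)) j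
        = if k = (⟨(i:ℕ)+1, hlt⟩ : Fin n) then vecMul ϱ ((Φ+1) * Φ ^ (k:ℕ)) j else 0 := by
      intro k
      by_cases h : (k:ℕ) = (i:ℕ)+1
      · rw [if_pos h, if_pos (Fin.ext h), one_mul]
      · rw [if_neg h, if_neg (fun hh => h (by rw [hh])), zero_mul]
    simp_rw [hsplit, Finset.sum_ite_eq', Finset.mem_univ, if_true]

/-- the Sylvester-type identity `T·Φ(a) − M·T = N·ϱᵀ·T` for `T = S⁻¹`,
where `M = Φ(m)`, `ϱ = m − a`, `N = (0, …, 0, 1)ᵀ`, and the `i`-th row of `S` is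
`ϱᵀ(Φ(a) + Iₙ)Φ(a)^{i−1}`. -/
theorem internal_model_sylvester {n : ℕ} (hn : 1 ≤ n) (a m ϱ : Fin n → ℝ)
    (hϱ : ϱ = m - a)
    (M : Matrix (Fin n) (Fin n) ℝ) (hM : M = companion m)
    (N : Fin n → ℝ) (hN : N = fun (i : Fin n) => if (i : ℕ) + 1 = n then (1 : ℝ) else 0)
    (S : Matrix (Fin n) (Fin n) ℝ)
    (hS : S = Matrix.of fun (i j : Fin n) =>
      Matrix.vecMul ϱ ((companion a + 1) * companion a ^ (i : ℕ)) j)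
    (hSinv : IsUnit S.det)
    (T : Matrix (Fin n) (Fin n) ℝ) (hT : T = S⁻¹) :
    T * companion a - M * T = Matrix.vecMulVec N ϱ * T := by
  have hcomm : companion a * S = S * companion a := comm_S hn a ϱ S hS
  have hST := Matrix.mul_nonsing_inv S hSinv
  have hTS := Matrix.nonsing_inv_mul S hSinv
  have hcommT : S⁻¹ * companion a = companion a * S⁻¹ := by
    calc S⁻¹ * companion a
        = S⁻¹ * companion a * (S * S⁻¹) := by rw [hST, mul_one]
      _ = S⁻¹ * (companion a * S) * S⁻¹ := by
          rw [← mul_assoc, mul_assoc S⁻¹ (companion a) S]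
      _ = S⁻¹ * (S * companion a) * S⁻¹ := by rw [hcomm]
      _ = companion a * S⁻¹ := by rw [← mul_assoc S⁻¹ S (companion a), hTS, one_mul]
  have hMeq : M = companion a - vecMulVec N ϱ := by
    rw [hM, hϱ, hN]
    ext i j
    simp only [companion, of_apply, Matrix.sub_apply, vecMulVec_apply, Pi.sub_apply]
    by_cases hc : (i:ℕ)+1 = n
    · rw [if_pos hc, if_pos hc, if_pos hc]; ring
    · rw [if_neg hc, if_neg hc, if_neg hc]; split_ifs <;> ring
  subst hT
  rw [hMeq, Matrix.sub_mul, hcommT]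
  exact sub_sub_cancel _ _
end

section
/- Let n ≥ 1, a, m ∈ ℝⁿ, ϱ = m − a, and let Φ(a) and Φ(m) be the companion matrices of a and m. Suppose every eigenvalue λ ∈ ℂ of Φ(a) satisfies Re λ = 0, and every eigenvalue λ ∈ ℂ of Φ(m) satisfies Re λ < 0. Then the matrix S ∈ Mₙ(ℝ) whose i-th row equals ϱᵀ(Φ(a) + Iₙ)Φ(a)^{i−1} for i = 1,…,n is invertible. -/
/-!
A kernel vector `x` of `S` gives `y = (Φ(a) + 1) x` with `ϱᵀ Φ(a)ⁱ y = 0` for `i < n`, hence for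
all `i` by Cayley–Hamilton, and `y ≠ 0` because `-1` is not an eigenvalue of `Φ(a)`. So the
unobservable subspace of `(Φ(a), ϱᵀ)` is a nonzero invariant subspace and, over `ℂ`, contains an
eigenvector `w` of `Φ(a)`. As `ϱᵀ w = 0` and `Φ(m) = Φ(a) - N ϱᵀ`, `w` is an eigenvector of `Φ(m)`
for the same eigenvalue, which cannot be both purely imaginary and in the open left half-plane.
-/

open Matrix

open Polynomial

namespace Matrix

variable {ι : Type*} [Fintype ι] [DecidableEq ι]

theorem isRoot_charpoly_of_mulVec_eq_smul {R : Type*} [CommRing R] [IsDomain R]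
    {A : Matrix ι ι R} {μ : R} {v : ι → R} (hv : v ≠ 0) (h : A *ᵥ v = μ • v) :
    A.charpoly.IsRoot μ := by
  rw [← charpoly_toLin', ← Module.End.hasEigenvalue_iff_isRoot_charpoly]
  exact Module.End.hasEigenvalue_of_hasEigenvector ⟨Module.End.mem_eigenspace_iff.mpr h, hv⟩

def unobservableSubspace {R : Type*} [CommRing R] (A : Matrix ι ι R) (r : ι → R) :
    Submodule R (ι → R) where
  carrier := {v | ∀ k : ℕ, r ⬝ᵥ (A ^ k *ᵥ v) = 0}
  zero_mem' := by simp
  add_mem' hv hw k := by rw [mulVec_add, dotProduct_add, hv k, hw k, add_zero]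
  smul_mem' c v hv k := by rw [mulVec_smul, dotProduct_smul, hv k, smul_zero]

theorem mem_unobservableSubspace_of_forall_lt_card {R : Type*} [CommRing R] [Nontrivial R]
    {A : Matrix ι ι R} {r v : ι → R} (h : ∀ i < Fintype.card ι, r ⬝ᵥ (A ^ i *ᵥ v) = 0) :
    v ∈ unobservableSubspace A r := fun k => by
  set q := X ^ k %ₘ A.charpoly
  have hq : q.degree < Fintype.card ι := by
    simpa [charpoly_degree_eq_dim] using degree_modByMonic_lt (X ^ k) A.charpoly_monic
  rw [pow_eq_aeval_mod_charpoly, aeval_eq_sum_range, sum_mulVec, dotProduct_sum]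
  refine Finset.sum_eq_zero fun i _ => ?_
  by_cases hi : q.coeff i = 0
  · rw [hi, zero_smul, zero_mulVec, dotProduct_zero]
  · have hik : i < Fintype.card ι := by exact_mod_cast (le_degree_of_ne_zero hi).trans_lt hq
    rw [smul_mulVec, dotProduct_smul, h i hik, smul_zero]

theorem mulVec_mem_unobservableSubspace {R : Type*} [CommRing R] {A : Matrix ι ι R} {r v : ι → R}
    (hv : v ∈ unobservableSubspace A r) : A *ᵥ v ∈ unobservableSubspace A r := fun k => by
  rw [mulVec_mulVec, ← pow_succ]
  exact hv (k + 1)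

theorem exists_eigenvector_mem_unobservableSubspace {K : Type*} [Field K] [IsAlgClosed K]
    {A : Matrix ι ι K} {r v : ι → K} (hv : v ∈ unobservableSubspace A r) (hv0 : v ≠ 0) :
    ∃ μ : K, ∃ w ∈ unobservableSubspace A r, w ≠ 0 ∧ A *ᵥ w = μ • w := by
  set U := unobservableSubspace A r
  have : Nontrivial U := ⟨⟨⟨v, hv⟩, 0, fun h => hv0 congr(Subtype.val $h)⟩⟩
  obtain ⟨μ, hμ⟩ := Module.End.exists_eigenvalue
    (A.mulVecLin.restrict fun _ => mulVec_mem_unobservableSubspace (r := r))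
  obtain ⟨w, hw, hw0⟩ := hμ.exists_hasEigenvector
  exact ⟨μ, w, w.2, fun h => hw0 (Subtype.ext h),
    congr(Subtype.val $(Module.End.mem_eigenspace_iff.mp hw))⟩

theorem map_mem_unobservableSubspace {R S : Type*} [CommRing R] [CommRing S] (f : R →+* S)
    {A : Matrix ι ι R} {r v : ι → R} (hv : v ∈ unobservableSubspace A r) :
    f ∘ v ∈ unobservableSubspace (A.map f) (f ∘ r) := fun k => by
  have hmap : f ∘ (A ^ k *ᵥ v) = (A.map f) ^ k *ᵥ (f ∘ v) := by
    ext i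
    rw [Function.comp_apply, RingHom.map_mulVec, Matrix.map_pow]
  rw [← hmap, ← RingHom.map_dotProduct, hv k, map_zero]

end Matrix

theorem companion_map_mulVec_eq_of_dotProduct_eq_zero {S : Type*} [CommRing S] (f : ℝ →+* S)
    {n : ℕ} {a m : Fin n → ℝ} {w : Fin n → S} (h : f ∘ (m - a) ⬝ᵥ w = 0) :
    (companion m).map f *ᵥ w = (companion a).map f *ᵥ w := by
  ext i
  by_cases hi : (i : ℕ) + 1 = n
  · simp only [mulVec, dotProduct, map_apply, companion, of_apply, if_pos hi]
    rw [← sub_eq_zero, ← Finset.sum_sub_distrib, ← neg_eq_zero, ← h]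
    simp only [dotProduct, Function.comp_apply, Pi.sub_apply, map_neg, map_sub]
    rw [← Finset.sum_neg_distrib]
    exact Finset.sum_congr rfl fun j _ => by ring
  · simp only [mulVec, dotProduct, map_apply, companion, of_apply, if_neg hi]

theorem observability_matrix_invertible_general {n : ℕ} (a m ϱ : Fin n → ℝ)
    (hϱ : ϱ = m - a)
    (ha : ∀ lam : ℂ, ((companion a).charpoly.map (algebraMap ℝ ℂ)).IsRoot lam → lam.re = 0)
    (hm : ∀ lam : ℂ, ((companion m).charpoly.map (algebraMap ℝ ℂ)).IsRoot lam → lam.re < 0)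
    (S : Matrix (Fin n) (Fin n) ℝ)
    (hS : S = Matrix.of fun (i j : Fin n) =>
      Matrix.vecMul ϱ ((companion a + 1) * companion a ^ (i : ℕ)) j) :
    IsUnit S := by
  set f := algebraMap ℝ ℂ
  set Φ := companion a
  rw [isUnit_iff_isUnit_det, isUnit_iff_ne_zero]
  intro hdet
  obtain ⟨x, hx0, hSx⟩ := exists_mulVec_eq_zero_iff.mpr hdet
  have hy0 : (Φ + 1) *ᵥ x ≠ 0 := by
    intro hy
    have hx : Φ *ᵥ x = (-1 : ℝ) • x := by
      rwa [add_mulVec, one_mulVec, add_eq_zero_iff_eq_neg, ← neg_one_smul ℝ] at hy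
    have := ha (f (-1)) ((isRoot_charpoly_of_mulVec_eq_smul hx0 hx).map)
    norm_num [f] at this
  have hy : (Φ + 1) *ᵥ x ∈ unobservableSubspace Φ ϱ :=
    mem_unobservableSubspace_of_forall_lt_card fun i hi => by
      have hrow : ϱ ᵥ* ((Φ + 1) * Φ ^ i) ⬝ᵥ x = 0 := by
        subst hS
        exact congrFun hSx ⟨i, by simpa using hi⟩
      rwa [((Commute.self_pow Φ i).add_left (Commute.one_left _)).eq, ← dotProduct_mulVec,
        ← mulVec_mulVec] at hrow
  have hfy0 : f ∘ ((Φ + 1) *ᵥ x) ≠ 0 := fun h =>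
    hy0 (funext fun i => f.injective (by simpa using congr_fun h i))
  obtain ⟨μ, w, hw, hw0, hΦw⟩ :=
    exists_eigenvector_mem_unobservableSubspace (map_mem_unobservableSubspace f hy) hfy0
  have hrw : f ∘ (m - a) ⬝ᵥ w = 0 := by simpa [hϱ] using hw 0
  have hre := ha μ (by rw [← charpoly_map]; exact isRoot_charpoly_of_mulVec_eq_smul hw0 hΦw)
  have hre' := hm μ (by
    rw [← charpoly_map]
    exact isRoot_charpoly_of_mulVec_eq_smul hw0
      ((companion_map_mulVec_eq_of_dotProduct_eq_zero f hrw).trans hΦw))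
  linarith

/-- if every eigenvalue of `Φ(a)` has zero real part and every eigenvalue of
`Φ(m)` has negative real part, then the matrix `S` whose `i`-th row is
`ϱᵀ(Φ(a) + Iₙ)Φ(a)^{i−1}` (with `ϱ = m − a`) is invertible. -/
theorem observability_matrix_invertible {n : ℕ} (hn : 1 ≤ n) (a m ϱ : Fin n → ℝ)
    (hϱ : ϱ = m - a)
    (ha : ∀ lam : ℂ, ((companion a).charpoly.map (algebraMap ℝ ℂ)).IsRoot lam → lam.re = 0)
    (hm : ∀ lam : ℂ, ((companion m).charpoly.map (algebraMap ℝ ℂ)).IsRoot lam → lam.re < 0)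
    (S : Matrix (Fin n) (Fin n) ℝ)
    (hS : S = Matrix.of fun (i j : Fin n) =>
      Matrix.vecMul ϱ ((companion a + 1) * companion a ^ (i : ℕ)) j) :
    IsUnit S :=
  observability_matrix_invertible_general a m ϱ hϱ ha hm S hS
end

section
/- Let n ≥ 1, a, m ∈ ℝⁿ, ϱ = m − a, Φ(a) and M = Φ(m) their companion matrices, N = (0,…,0,1)ᵀ ∈ ℝⁿ, and let S ∈ Mₙ(ℝ) be the matrix whose i-th row equals ϱᵀ(Φ(a) + Iₙ)Φ(a)^{i−1}; assume S is invertible and set T = S⁻¹. Let u : ℝ → ℝ be n-times differentiable with u⁽ⁿ⁾(t) + a₁u(t) + a₂u′(t) + ⋯ + aₙu⁽ⁿ⁻¹⁾(t) = 0 for all t, set ξ(t) = (u(t), u′(t), …, u⁽ⁿ⁻¹⁾(t)) and θ(t) = T·ξ(t). Then for all t: θ′(t) = M·θ(t) + N·(ϱᵀθ(t)) and u(t) = ϱᵀ(Φ(a) + Iₙ)θ(t). -/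
open Matrix

/-!
The vector `ξ = (u, u′, …, u⁽ⁿ⁻¹⁾)` solves `ξ′ = Φ(a) ξ`. The matrix `S` is the Krylov matrix
with rows `r Φ(a)^i`, `r = ϱᵀ(Φ(a) + Iₙ)`; shifting its rows is multiplication by `Φ(a)` on either
side, the last row closing up by Cayley–Hamilton for `Φ(a)`. Hence `T = S⁻¹` commutes with
`Φ(a)` and `θ′ = Φ(a) θ`, which is `Mθ + N ϱᵀθ` because `Φ(a)` and `M` differ only in their last
rows, by `ϱᵀ`. Finally `r = e₀ᵀ S`, so `r T ξ = e₀ᵀ ξ = u`.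
-/

theorem HasDerivAt.matrix_mulVec {𝕜 ι κ : Type*} [NontriviallyNormedField 𝕜] [Fintype κ]
    {f : 𝕜 → κ → 𝕜} {f' : κ → 𝕜} {t : 𝕜} (A : Matrix ι κ 𝕜) (hf : HasDerivAt f f' t) :
    HasDerivAt (fun s => A *ᵥ f s) (A *ᵥ f') t :=
  hasDerivAt_pi.2 fun i => by
    simpa [mulVec, dotProduct] using
      HasDerivAt.fun_sum fun j _ => (hasDerivAt_pi.1 hf j).const_mul (A i j)

variable {n : ℕ}

section Companion

variable (a : Fin n → ℝ)

theorem companion_row_of_lt (i : Fin n) (hi : (i : ℕ) + 1 < n) :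
    (companion a).row i = Pi.single ⟨i + 1, hi⟩ 1 := by
  ext j
  simp [companion, Pi.single_apply, hi.ne', Fin.ext_iff, eq_comm]

theorem companion_row_of_eq (i : Fin n) (hi : (i : ℕ) + 1 = n) : (companion a).row i = -a := by
  ext j
  simp [companion, hi]

theorem companion_mulVec_apply_of_lt (x : Fin n → ℝ) (i : Fin n) (hi : (i : ℕ) + 1 < n) :
    (companion a *ᵥ x) i = x ⟨i + 1, hi⟩ := by
  rw [← single_one_dotProduct ⟨i + 1, hi⟩ x, ← companion_row_of_lt a i hi]; rfl

theorem companion_mulVec_apply_of_eq (x : Fin n → ℝ) (i : Fin n) (hi : (i : ℕ) + 1 = n) :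
    (companion a *ᵥ x) i = -(a ⬝ᵥ x) := by
  rw [← neg_dotProduct, ← companion_row_of_eq a i hi]; rfl

theorem single_zero_vecMul_companion_pow {k : ℕ} (hk : k < n) :
    Pi.single ⟨0, by omega⟩ 1 ᵥ* companion a ^ k = Pi.single ⟨k, hk⟩ 1 := by
  induction k with
  | zero => simp
  | succ k ih =>
    rw [pow_succ, ← vecMul_vecMul, ih (by omega), single_one_vecMul]
    exact companion_row_of_lt a _ hk

/- Row `0` of the left side `X` vanishes since `e₀ Φᵏ = eₖ` for `k < n`; as `X` commutes with `Φ`,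
row `i` is `e₀ Φⁱ X = e₀ X Φⁱ = 0` as well. -/
theorem companion_pow_add_sum_smul_pow_eq_zero :
    companion a ^ n + ∑ k : Fin n, a k • companion a ^ (k : ℕ) = 0 := by
  set X := companion a ^ n + ∑ k : Fin n, a k • companion a ^ (k : ℕ)
  ext i j
  have h0 : 0 < n := i.pos
  have hrow_zero : Pi.single ⟨0, h0⟩ 1 ᵥ* X = 0 := by
    obtain ⟨l, rfl⟩ : ∃ l, n = l + 1 := ⟨n - 1, by omega⟩
    simp only [X, vecMul_add, vecMul_sum, vecMul_smul, pow_succ, ← vecMul_vecMul,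
      single_zero_vecMul_companion_pow a (Nat.lt_succ_self l),
      fun k : Fin (l + 1) => single_zero_vecMul_companion_pow a k.isLt]
    rw [single_one_vecMul, companion_row_of_eq a ⟨l, _⟩ rfl]
    ext j
    simp [Pi.single_apply]
  have hcomm : Commute (companion a ^ (i : ℕ)) X :=
    ((Commute.refl _).pow_pow _ _).add_right
      (.sum_right _ _ _ fun k _ => ((Commute.refl _).pow_pow _ _).smul_right _)
  calc X i j = (Pi.single ⟨0, h0⟩ 1 ᵥ* companion a ^ (i : ℕ) ᵥ* X) j := by
        rw [single_zero_vecMul_companion_pow a i.isLt, single_one_vecMul]; rfl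
    _ = 0 := by rw [vecMul_vecMul, hcomm.eq, ← vecMul_vecMul, hrow_zero, zero_vecMul]; rfl

theorem companion_mulVec_eq_add (m x : Fin n → ℝ) :
    companion a *ᵥ x = companion m *ᵥ x +
      ((m - a) ⬝ᵥ x) • fun i : Fin n => if (i : ℕ) + 1 = n then (1 : ℝ) else 0 := by
  ext i
  by_cases hi : (i : ℕ) + 1 = n
  · simp [companion_mulVec_apply_of_eq _ _ i hi, hi, sub_dotProduct]
    ring
  · simp [companion_mulVec_apply_of_lt _ _ i (lt_of_le_of_ne i.isLt hi), hi]

end Companion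

def krylov {R : Type*} [Semiring R] (r : Fin n → R) (A : Matrix (Fin n) (Fin n) R) :
    Matrix (Fin n) (Fin n) R :=
  of fun i => r ᵥ* A ^ (i : ℕ)

theorem single_zero_vecMul_krylov {R : Type*} [Semiring R] (hn : 0 < n) (r : Fin n → R)
    (A : Matrix (Fin n) (Fin n) R) : Pi.single ⟨0, hn⟩ 1 ᵥ* krylov r A = r := by
  simp [krylov]

theorem commute_companion_krylov (a r : Fin n → ℝ) :
    Commute (companion a) (krylov r (companion a)) := by
  refine Matrix.ext fun i => congrFun ?_
  change (companion a).row i ᵥ* krylov r (companion a) = r ᵥ* companion a ^ (i : ℕ) ᵥ* companion a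
  rw [vecMul_vecMul, ← pow_succ]
  by_cases hi : (i : ℕ) + 1 = n
  · have hCH := eq_neg_of_add_eq_zero_left (companion_pow_add_sum_smul_pow_eq_zero a)
    rw [companion_row_of_eq a i hi, hi, hCH, neg_vecMul, vecMul_neg, vecMul_eq_sum, vecMul_sum]
    simp only [vecMul_smul]
    rfl
  · rw [companion_row_of_lt a i (lt_of_le_of_ne i.isLt hi), single_one_vecMul]
    rfl

theorem hasDerivAt_iteratedDeriv_of_linearODE (a : Fin n → ℝ) {u : ℝ → ℝ} {t : ℝ}
    (hdiff : ∀ i < n, DifferentiableAt ℝ (iteratedDeriv i u) t)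
    (hode : iteratedDeriv n u t + ∑ i : Fin n, a i * iteratedDeriv i u t = 0) :
    HasDerivAt (fun s (i : Fin n) => iteratedDeriv i u s)
      (companion a *ᵥ fun i => iteratedDeriv i u t) t := by
  refine hasDerivAt_pi.2 fun i => ?_
  convert (hdiff i i.isLt).hasDerivAt using 1
  rw [← iteratedDeriv_succ]
  by_cases hi : (i : ℕ) + 1 = n
  · rw [companion_mulVec_apply_of_eq a _ i hi, hi]
    simp only [dotProduct]
    linarith
  · rw [companion_mulVec_apply_of_lt a _ i (lt_of_le_of_ne i.isLt hi)]

/-- the nonlinear internal model identity: after the coordinate change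
`θ = T·ξ` with `T = S⁻¹`, the steady-state generator satisfies
`θ′ = Mθ + N(ϱᵀθ)` and `u = ϱᵀ(Φ(a) + Iₙ)θ`. -/
theorem internal_model_identity {n : ℕ} (hn : 1 ≤ n) (a m ϱ : Fin n → ℝ)
    (hϱ : ϱ = m - a)
    (M : Matrix (Fin n) (Fin n) ℝ) (hM : M = companion m)
    (N : Fin n → ℝ) (hN : N = fun (i : Fin n) => if (i : ℕ) + 1 = n then (1 : ℝ) else 0)
    (S : Matrix (Fin n) (Fin n) ℝ)
    (hS : S = Matrix.of fun (i j : Fin n) =>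
      Matrix.vecMul ϱ ((companion a + 1) * companion a ^ (i : ℕ)) j)
    (hSinv : IsUnit S.det)
    (T : Matrix (Fin n) (Fin n) ℝ) (hT : T = S⁻¹)
    (u : ℝ → ℝ)
    (hdiff : ∀ i < n, Differentiable ℝ (iteratedDeriv i u))
    (hode : ∀ t : ℝ, iteratedDeriv n u t + ∑ i : Fin n, a i * iteratedDeriv i u t = 0)
    (ξ : ℝ → (Fin n → ℝ)) (hξ : ξ = fun t => fun i : Fin n => iteratedDeriv i u t)
    (θ : ℝ → (Fin n → ℝ)) (hθ : θ = fun t => T.mulVec (ξ t)) :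
    (∀ t : ℝ, HasDerivAt θ (M.mulVec (θ t) + (ϱ ⬝ᵥ θ t) • N) t) ∧
      (∀ t : ℝ, u t = ϱ ⬝ᵥ (companion a + 1).mulVec (θ t)) := by
  subst hM hN hT hξ hθ
  have hS_krylov : S = krylov (ϱ ᵥ* (companion a + 1)) (companion a) := by
    ext i j
    simp [hS, krylov]
  obtain ⟨U, hU⟩ := (isUnit_iff_isUnit_det S).2 hSinv
  have hcomm : Commute (companion a) S⁻¹ := by
    rw [← hU, ← coe_units_inv]
    exact (hU ▸ hS_krylov ▸ commute_companion_krylov a _).units_inv_right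
  refine ⟨fun t => ?_, fun t => ?_⟩
  · rw [hϱ, ← companion_mulVec_eq_add, mulVec_mulVec, hcomm.eq, ← mulVec_mulVec]
    exact (hasDerivAt_iteratedDeriv_of_linearODE a (fun i hi => (hdiff i hi).differentiableAt)
      (hode t)).matrix_mulVec S⁻¹
  · have hrow : ϱ ᵥ* (companion a + 1) ᵥ* S⁻¹ = Pi.single ⟨0, hn⟩ 1 := by
      rw [← single_zero_vecMul_krylov hn (ϱ ᵥ* (companion a + 1)) (companion a), ← hS_krylov,
        vecMul_vecMul, mul_nonsing_inv S hSinv, vecMul_one]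
    rw [dotProduct_mulVec, dotProduct_mulVec, hrow, single_one_dotProduct]
    rfl
end
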